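/- Let Ω₁ ⊆ ℝ^{N₁} and Ω₂ ⊆ ℝ^{N₂} be open sets. Suppose u : Ω₁ → ℝ is continuously differentiable with u and |∇u| square-integrable on Ω₁ and satisfies ∫_{Ω₁} ∇u·∇h dx = λ ∫_{Ω₁} u·h dx for every smooth compactly supported function h : ℝ^{N₁} → ℝ with support contained in Ω₁; and suppose s : Ω₂ → ℝ is continuously differentiable with s and |∇s| square-integrable on Ω₂ and is weakly harmonic, i.e. ∫_{Ω₂} ∇s·∇h dy = 0 for every smooth compactly supported h : ℝ^{N₂} → ℝ with support contained in Ω₂. Then the function w(x,y) = u(x)·s(y) satisfies ∫_{Ω₁×Ω₂} ∇w·∇h dx dy = λ ∫_{Ω₁×Ω₂} w·h dx dy for every smooth compactly supported function h : ℝ^{N₁}×ℝ^{N₂} → ℝ with support contained in Ω₁×Ω₂. -/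

import Mathlib

/-!
On `Ω₁ × Ω₂` the product rule splits the integrand as
`∇w·∇h = s(y) ∇u(x)·∇ₓh(x, y) + u(x) ∇s(y)·∇_y h(x, y)`.
Every slice `h(·, y)` is a test function on `Ω₁` and every slice `h(x, ·)` one on `Ω₂`, so by
Fubini the first term integrates (in `x` first) to `λ ∫ s(y) u(x) h(x, y)` and the second
(in `y` first) to `0`. Fubini applies because each integrand is continuous on `Ω₁ × Ω₂` and
vanishes off the compact set `tsupport h ⊆ Ω₁ × Ω₂`.
-/

open MeasureTheory RealInnerProductSpace
open scoped ContDiff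

/-- The dot product `∇w · ∇h` at `p` of the gradients of two functions on
`ℝ^{N₁} × ℝ^{N₂}`: the gradient on the product is the pair of the gradients in the
`x`- and `y`-variables, and the inner product is the sum of the inner products of the
components. -/
noncomputable def gradDotProd {N₁ N₂ : ℕ}
    (w h : EuclideanSpace ℝ (Fin N₁) × EuclideanSpace ℝ (Fin N₂) → ℝ)
    (p : EuclideanSpace ℝ (Fin N₁) × EuclideanSpace ℝ (Fin N₂)) : ℝ :=
  ⟪gradient (fun x => w (x, p.2)) p.1, gradient (fun x => h (x, p.2)) p.1⟫ +
    ⟪gradient (fun y => w (p.1, y)) p.2, gradient (fun y => h (p.1, y)) p.2⟫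

open Function Set

section Gradient

variable {E : Type*} [NormedAddCommGroup E] [InnerProductSpace ℝ E] [CompleteSpace E]
  {f : E → ℝ} {x : E}

theorem gradient_mul_const (hf : DifferentiableAt ℝ f x) (c : ℝ) :
    gradient (fun x => f x * c) x = c • gradient f x := by
  simp only [gradient, fderiv_mul_const hf, map_smul]

theorem gradient_const_mul (hf : DifferentiableAt ℝ f x) (c : ℝ) :
    gradient (fun x => c * f x) x = c • gradient f x := by
  simp only [gradient, fderiv_const_mul hf, map_smul]

theorem support_gradient_subset (f : E → ℝ) : support (gradient f) ⊆ tsupport f := fun x hx =>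
  support_fderiv_subset ℝ fun h0 => hx (by simp [gradient, h0])

theorem ContDiffOn.continuousOn_gradient_of_isOpen {s : Set E} (hf : ContDiffOn ℝ 1 f s)
    (hs : IsOpen s) : ContinuousOn (gradient f) s :=
  (InnerProductSpace.toDual ℝ E).symm.continuous.comp_continuousOn
    (hf.continuousOn_fderiv_of_isOpen hs le_rfl)

end Gradient

section Slices

variable {X Y M : Type*} [TopologicalSpace X] [TopologicalSpace Y] [Zero M] {h : X × Y → M}

theorem tsupport_comp_prodMk_left_subset (h : X × Y → M) (y : Y) :
    tsupport (fun x => h (x, y)) ⊆ (·, y) ⁻¹' tsupport h :=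
  tsupport_comp_subset_preimage h (Continuous.prodMk_left y)

theorem tsupport_comp_prodMk_right_subset (h : X × Y → M) (x : X) :
    tsupport (fun y => h (x, y)) ⊆ (x, ·) ⁻¹' tsupport h :=
  tsupport_comp_subset_preimage h (Continuous.prodMk_right x)

theorem HasCompactSupport.comp_prodMk_left (hh : HasCompactSupport h) (y : Y) :
    HasCompactSupport fun x => h (x, y) :=
  (hh.image continuous_fst).of_isClosed_subset (isClosed_tsupport _) fun x hx =>
    ⟨(x, y), tsupport_comp_prodMk_left_subset h y hx, rfl⟩

theorem HasCompactSupport.comp_prodMk_right (hh : HasCompactSupport h) (x : X) :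
    HasCompactSupport fun y => h (x, y) :=
  (hh.image continuous_snd).of_isClosed_subset (isClosed_tsupport _) fun y hy =>
    ⟨(x, y), tsupport_comp_prodMk_right_subset h x hy, rfl⟩

end Slices

section TestFunctionSlices

variable {E F : Type*} [NormedAddCommGroup E] [NormedSpace ℝ E] [NormedAddCommGroup F]
  [NormedSpace ℝ F] {n : WithTop ℕ∞} {U : Set E} {V : Set F} {h : E × F → ℝ}

theorem forall_slice_fst_of_forall_testFunction {P : (E → ℝ) → Prop}
    (hP : ∀ φ : E → ℝ, ContDiff ℝ n φ → HasCompactSupport φ → tsupport φ ⊆ U → P φ)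
    (hh : ContDiff ℝ n h) (hhc : HasCompactSupport h) (hhs : tsupport h ⊆ U ×ˢ V) (y : F) :
    P fun x => h (x, y) :=
  hP _ (hh.comp (contDiff_id.prodMk contDiff_const)) (hhc.comp_prodMk_left y)
    fun _ hx => (hhs (tsupport_comp_prodMk_left_subset h y hx)).1

theorem forall_slice_snd_of_forall_testFunction {P : (F → ℝ) → Prop}
    (hP : ∀ φ : F → ℝ, ContDiff ℝ n φ → HasCompactSupport φ → tsupport φ ⊆ V → P φ)
    (hh : ContDiff ℝ n h) (hhc : HasCompactSupport h) (hhs : tsupport h ⊆ U ×ˢ V) (x : E) :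
    P fun y => h (x, y) :=
  hP _ (hh.comp (contDiff_const.prodMk contDiff_id)) (hhc.comp_prodMk_right x)
    fun _ hy => (hhs (tsupport_comp_prodMk_right_subset h x hy)).2

end TestFunctionSlices

section PartialGradient

variable {E F : Type*} [NormedAddCommGroup E] [InnerProductSpace ℝ E] [CompleteSpace E]

noncomputable def gradientFst (h : E × F → ℝ) (p : E × F) : E :=
  gradient (fun x => h (x, p.2)) p.1

noncomputable def gradientSnd (h : F × E → ℝ) (p : F × E) : E :=
  gradient (fun y => h (p.1, y)) p.2

theorem support_gradientFst_subset [TopologicalSpace F] (h : E × F → ℝ) :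
    support (gradientFst h) ⊆ tsupport h :=
  fun p hp => tsupport_comp_prodMk_left_subset h p.2 (support_gradient_subset _ hp)

theorem support_gradientSnd_subset [TopologicalSpace F] (h : F × E → ℝ) :
    support (gradientSnd h) ⊆ tsupport h :=
  fun p hp => tsupport_comp_prodMk_right_subset h p.1 (support_gradient_subset _ hp)

variable [NormedAddCommGroup F] [NormedSpace ℝ F]

theorem gradientFst_eq {h : E × F → ℝ} {p : E × F} (hh : DifferentiableAt ℝ h p) :
    gradientFst h p = (InnerProductSpace.toDual ℝ E).symm
      ((fderiv ℝ h p).comp (ContinuousLinearMap.inl ℝ E F)) :=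
  (hh.hasFDerivAt.comp p.1 (hasFDerivAt_prodMk_left p.1 p.2)).hasGradientAt.gradient

theorem gradientSnd_eq {h : F × E → ℝ} {p : F × E} (hh : DifferentiableAt ℝ h p) :
    gradientSnd h p = (InnerProductSpace.toDual ℝ E).symm
      ((fderiv ℝ h p).comp (ContinuousLinearMap.inr ℝ F E)) :=
  (hh.hasFDerivAt.comp p.2 (hasFDerivAt_prodMk_right p.1 p.2)).hasGradientAt.gradient

theorem ContDiff.continuous_gradientFst {h : E × F → ℝ} (hh : ContDiff ℝ 1 h) :
    Continuous (gradientFst h) := by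
  have : gradientFst h = fun p => (InnerProductSpace.toDual ℝ E).symm
      ((fderiv ℝ h p).comp (ContinuousLinearMap.inl ℝ E F)) :=
    funext fun p => gradientFst_eq (hh.differentiable one_ne_zero p)
  rw [this]
  exact (InnerProductSpace.toDual ℝ E).symm.continuous.comp
    ((hh.continuous_fderiv one_ne_zero).clm_comp continuous_const)

theorem ContDiff.continuous_gradientSnd {h : F × E → ℝ} (hh : ContDiff ℝ 1 h) :
    Continuous (gradientSnd h) := by
  have : gradientSnd h = fun p => (InnerProductSpace.toDual ℝ E).symm
      ((fderiv ℝ h p).comp (ContinuousLinearMap.inr ℝ F E)) :=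
    funext fun p => gradientSnd_eq (hh.differentiable one_ne_zero p)
  rw [this]
  exact (InnerProductSpace.toDual ℝ E).symm.continuous.comp
    ((hh.continuous_fderiv one_ne_zero).clm_comp continuous_const)

end PartialGradient

theorem ContinuousOn.integrable_of_support_subset_isCompact {X G : Type*} [TopologicalSpace X]
    [T2Space X] [MeasurableSpace X] [OpensMeasurableSpace X] [NormedAddCommGroup G]
    {μ : Measure X} [IsFiniteMeasureOnCompacts μ] {f : X → G} {K : Set X}
    (hf : ContinuousOn f K) (hK : IsCompact K) (hfK : support f ⊆ K) : Integrable f μ :=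
  (integrableOn_iff_integrable_of_support_subset hfK).mp (hf.integrableOn_compact hK)

section ProductIntegrands

variable {E F : Type*} [NormedAddCommGroup E] [InnerProductSpace ℝ E] [CompleteSpace E]
  [NormedAddCommGroup F] [NormedSpace ℝ F] [MeasurableSpace E] [MeasurableSpace F]

theorem integrable_mul_inner_gradientFst [OpensMeasurableSpace (E × F)] {μ : Measure (E × F)}
    [IsFiniteMeasureOnCompacts μ] {U : Set E} {V : Set F} {f : E → ℝ} {g : F → ℝ}
    {h : E × F → ℝ} (hf : ContinuousOn (gradient f) U) (hg : ContinuousOn g V)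
    (hh : ContDiff ℝ 1 h) (hhc : HasCompactSupport h) (hhs : tsupport h ⊆ U ×ˢ V) :
    Integrable (fun p => g p.2 * ⟪gradient f p.1, gradientFst h p⟫) μ := by
  have hcont : ContinuousOn (fun p => g p.2 * ⟪gradient f p.1, gradientFst h p⟫) (U ×ˢ V) :=
    (hg.comp continuousOn_snd mapsTo_snd_prod).mul
      ((hf.comp continuousOn_fst mapsTo_fst_prod).inner hh.continuous_gradientFst.continuousOn)
  refine (hcont.mono hhs).integrable_of_support_subset_isCompact hhc fun p hp => ?_
  refine support_gradientFst_subset h fun h0 => hp ?_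
  simp only [h0, inner_zero_right, mul_zero]

theorem integrable_mul_inner_gradientSnd [OpensMeasurableSpace (F × E)] {μ : Measure (F × E)}
    [IsFiniteMeasureOnCompacts μ] {U : Set F} {V : Set E} {f : F → ℝ} {g : E → ℝ}
    {h : F × E → ℝ} (hf : ContinuousOn f U) (hg : ContinuousOn (gradient g) V)
    (hh : ContDiff ℝ 1 h) (hhc : HasCompactSupport h) (hhs : tsupport h ⊆ U ×ˢ V) :
    Integrable (fun p => f p.1 * ⟪gradient g p.2, gradientSnd h p⟫) μ := by
  have hcont : ContinuousOn (fun p => f p.1 * ⟪gradient g p.2, gradientSnd h p⟫) (U ×ˢ V) :=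
    (hf.comp continuousOn_fst mapsTo_fst_prod).mul
      ((hg.comp continuousOn_snd mapsTo_snd_prod).inner hh.continuous_gradientSnd.continuousOn)
  refine (hcont.mono hhs).integrable_of_support_subset_isCompact hhc fun p hp => ?_
  refine support_gradientSnd_subset h fun h0 => hp ?_
  simp only [h0, inner_zero_right, mul_zero]

end ProductIntegrands

theorem integrable_mul_mul_of_tsupport_subset {X Y : Type*} [TopologicalSpace X]
    [TopologicalSpace Y] [T2Space (X × Y)] [MeasurableSpace X] [MeasurableSpace Y]
    [OpensMeasurableSpace (X × Y)] {μ : Measure (X × Y)} [IsFiniteMeasureOnCompacts μ]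
    {U : Set X} {V : Set Y} {f : X → ℝ} {g : Y → ℝ} {h : X × Y → ℝ}
    (hf : ContinuousOn f U) (hg : ContinuousOn g V) (hh : Continuous h)
    (hhc : HasCompactSupport h) (hhs : tsupport h ⊆ U ×ˢ V) :
    Integrable (fun p => f p.1 * g p.2 * h p) μ := by
  have hcont : ContinuousOn (fun p => f p.1 * g p.2 * h p) (U ×ˢ V) :=
    ((hf.comp continuousOn_fst mapsTo_fst_prod).mul
      (hg.comp continuousOn_snd mapsTo_snd_prod)).mul hh.continuousOn
  exact (hcont.mono hhs).integrable_of_support_subset_isCompact hhc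
    ((support_mul_subset_right _ _).trans (subset_tsupport h))

section Fubini

variable {α β : Type*} [MeasurableSpace α] [MeasurableSpace β] {μ : Measure α} {ν : Measure β}
  [SFinite μ] [SFinite ν] {s : Set α} {t : Set β}

theorem setIntegral_prod_eq_mul_of_forall_setIntegral_eq {f g : α × β → ℝ}
    (hf : IntegrableOn f (s ×ˢ t) (μ.prod ν)) (hg : IntegrableOn g (s ×ˢ t) (μ.prod ν)) (c : ℝ)
    (hfg : ∀ y, ∫ x in s, f (x, y) ∂μ = c * ∫ x in s, g (x, y) ∂μ) :
    ∫ p in s ×ˢ t, f p ∂(μ.prod ν) = c * ∫ p in s ×ˢ t, g p ∂(μ.prod ν) := by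
  rw [IntegrableOn, ← Measure.prod_restrict] at hf hg
  rw [← Measure.prod_restrict, integral_prod_symm f hf, integral_prod_symm g hg,
    ← integral_const_mul]
  simp_rw [hfg]

theorem setIntegral_prod_eq_zero_of_forall_setIntegral_eq_zero {f : α × β → ℝ}
    (hf : IntegrableOn f (s ×ˢ t) (μ.prod ν)) (hf0 : ∀ x, ∫ y in t, f (x, y) ∂ν = 0) :
    ∫ p in s ×ˢ t, f p ∂(μ.prod ν) = 0 := by
  rw [IntegrableOn, ← Measure.prod_restrict] at hf
  rw [← Measure.prod_restrict, integral_prod f hf]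
  simp_rw [hf0, integral_zero]

end Fubini

theorem gradDotProd_mul_eq {N₁ N₂ : ℕ} {u : EuclideanSpace ℝ (Fin N₁) → ℝ}
    {s : EuclideanSpace ℝ (Fin N₂) → ℝ}
    (h : EuclideanSpace ℝ (Fin N₁) × EuclideanSpace ℝ (Fin N₂) → ℝ)
    {p : EuclideanSpace ℝ (Fin N₁) × EuclideanSpace ℝ (Fin N₂)}
    (hu : DifferentiableAt ℝ u p.1) (hs : DifferentiableAt ℝ s p.2) :
    gradDotProd (fun q => u q.1 * s q.2) h p =
      s p.2 * ⟪gradient u p.1, gradientFst h p⟫ + u p.1 * ⟪gradient s p.2, gradientSnd h p⟫ := by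
  simp only [gradDotProd, gradient_mul_const hu, gradient_const_mul hs, real_inner_smul_left]
  rfl

theorem dyad_weak_eigen_harmonic_general {N₁ N₂ : ℕ}
    (Ω₁ : Set (EuclideanSpace ℝ (Fin N₁))) (Ω₂ : Set (EuclideanSpace ℝ (Fin N₂)))
    (hΩ₁ : IsOpen Ω₁) (hΩ₂ : IsOpen Ω₂)
    (u : EuclideanSpace ℝ (Fin N₁) → ℝ) (s : EuclideanSpace ℝ (Fin N₂) → ℝ)
    (lam : ℝ)
    (hu : ContDiffOn ℝ 1 u Ω₁) (hs : ContDiffOn ℝ 1 s Ω₂)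
    (hue : ∀ h : EuclideanSpace ℝ (Fin N₁) → ℝ, ContDiff ℝ ∞ h → HasCompactSupport h →
      tsupport h ⊆ Ω₁ →
      ∫ x in Ω₁, ⟪gradient u x, gradient h x⟫ = lam * ∫ x in Ω₁, u x * h x)
    (hse : ∀ h : EuclideanSpace ℝ (Fin N₂) → ℝ, ContDiff ℝ ∞ h → HasCompactSupport h →
      tsupport h ⊆ Ω₂ →
      ∫ y in Ω₂, ⟪gradient s y, gradient h y⟫ = 0) :
    ∀ h : EuclideanSpace ℝ (Fin N₁) × EuclideanSpace ℝ (Fin N₂) → ℝ,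
      ContDiff ℝ ∞ h → HasCompactSupport h → tsupport h ⊆ Ω₁ ×ˢ Ω₂ →
      ∫ p in Ω₁ ×ˢ Ω₂, gradDotProd (fun q => u q.1 * s q.2) h p =
        lam * ∫ p in Ω₁ ×ˢ Ω₂, (u p.1 * s p.2) * h p := by
  intro h hh hhc hhs
  have hh1 : ContDiff ℝ 1 h := hh.of_le (by exact_mod_cast le_top)
  have hI₁ : IntegrableOn (fun p => s p.2 * ⟪gradient u p.1, gradientFst h p⟫) (Ω₁ ×ˢ Ω₂) :=
    (integrable_mul_inner_gradientFst (hu.continuousOn_gradient_of_isOpen hΩ₁)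
      hs.continuousOn hh1 hhc hhs).integrableOn
  have hI₂ : IntegrableOn (fun p => u p.1 * ⟪gradient s p.2, gradientSnd h p⟫) (Ω₁ ×ˢ Ω₂) :=
    (integrable_mul_inner_gradientSnd hu.continuousOn
      (hs.continuousOn_gradient_of_isOpen hΩ₂) hh1 hhc hhs).integrableOn
  have hI₃ : IntegrableOn (fun p => u p.1 * s p.2 * h p) (Ω₁ ×ˢ Ω₂) :=
    (integrable_mul_mul_of_tsupport_subset hu.continuousOn hs.continuousOn hh.continuous
      hhc hhs).integrableOn
  have slice₁ (y) : ∫ x in Ω₁, s y * ⟪gradient u x, gradientFst h (x, y)⟫ =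
      lam * ∫ x in Ω₁, u x * s y * h (x, y) := by
    simp only [gradientFst, integral_const_mul, mul_right_comm _ (s y), integral_mul_const,
      forall_slice_fst_of_forall_testFunction hue hh hhc hhs y]
    ring
  have slice₂ (x) : ∫ y in Ω₂, u x * ⟪gradient s y, gradientSnd h (x, y)⟫ = 0 := by
    simp only [gradientSnd, integral_const_mul,
      forall_slice_snd_of_forall_testFunction hse hh hhc hhs x, mul_zero]
  rw [setIntegral_congr_fun (hΩ₁.prod hΩ₂).measurableSet
      fun p hp => gradDotProd_mul_eq h
        ((hu.contDiffAt (hΩ₁.mem_nhds hp.1)).differentiableAt one_ne_zero)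
        ((hs.contDiffAt (hΩ₂.mem_nhds hp.2)).differentiableAt one_ne_zero),
    integral_add hI₁ hI₂, Measure.volume_eq_prod,
    setIntegral_prod_eq_zero_of_forall_setIntegral_eq_zero hI₂ slice₂, add_zero]
  exact setIntegral_prod_eq_mul_of_forall_setIntegral_eq hI₁ hI₃ lam slice₁

/-- Suppose `u` is `C¹` on the open set `Ω₁ ⊆ ℝ^{N₁}`, with `u` and
`|∇u|` square-integrable on `Ω₁`, and satisfies the weak eigenequation
`∫_{Ω₁} ∇u·∇h = λ ∫_{Ω₁} u·h` for all smooth compactly supported `h` with support in `Ω₁`;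
and suppose `s` is `C¹` on the open set `Ω₂ ⊆ ℝ^{N₂}`, with `s` and `|∇s|`
square-integrable, and weakly harmonic on `Ω₂`.  Then `w(x,y) = u(x)·s(y)` satisfies
`∫_{Ω₁×Ω₂} ∇w·∇h = λ ∫_{Ω₁×Ω₂} w·h` for all smooth compactly supported `h` with support in
`Ω₁ × Ω₂`. -/
theorem dyad_weak_eigen_harmonic {N₁ N₂ : ℕ}
    (Ω₁ : Set (EuclideanSpace ℝ (Fin N₁))) (Ω₂ : Set (EuclideanSpace ℝ (Fin N₂)))
    (hΩ₁ : IsOpen Ω₁) (hΩ₂ : IsOpen Ω₂)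
    (u : EuclideanSpace ℝ (Fin N₁) → ℝ) (s : EuclideanSpace ℝ (Fin N₂) → ℝ)
    (lam : ℝ)
    (hu : ContDiffOn ℝ 1 u Ω₁) (hs : ContDiffOn ℝ 1 s Ω₂)
    (hu2 : IntegrableOn (fun x => u x ^ 2) Ω₁)
    (hgu2 : IntegrableOn (fun x => ‖gradient u x‖ ^ 2) Ω₁)
    (hs2 : IntegrableOn (fun y => s y ^ 2) Ω₂)
    (hgs2 : IntegrableOn (fun y => ‖gradient s y‖ ^ 2) Ω₂)
    (hue : ∀ h : EuclideanSpace ℝ (Fin N₁) → ℝ, ContDiff ℝ ∞ h → HasCompactSupport h →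
      tsupport h ⊆ Ω₁ →
      ∫ x in Ω₁, ⟪gradient u x, gradient h x⟫ = lam * ∫ x in Ω₁, u x * h x)
    (hse : ∀ h : EuclideanSpace ℝ (Fin N₂) → ℝ, ContDiff ℝ ∞ h → HasCompactSupport h →
      tsupport h ⊆ Ω₂ →
      ∫ y in Ω₂, ⟪gradient s y, gradient h y⟫ = 0) :
    ∀ h : EuclideanSpace ℝ (Fin N₁) × EuclideanSpace ℝ (Fin N₂) → ℝ,
      ContDiff ℝ ∞ h → HasCompactSupport h → tsupport h ⊆ Ω₁ ×ˢ Ω₂ →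
      ∫ p in Ω₁ ×ˢ Ω₂, gradDotProd (fun q => u q.1 * s q.2) h p =
        lam * ∫ p in Ω₁ ×ˢ Ω₂, (u p.1 * s p.2) * h p :=
  dyad_weak_eigen_harmonic_general Ω₁ Ω₂ hΩ₁ hΩ₂ u s lam hu hs hue hse
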